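/- Let u : ℝ² → ℝ be smooth with compact support. Then ∫_{ℝ²} u · det(D²u) dx = 3 ∫_{ℝ²} u_{x₁} u_{x₁x₂} u_{x₂} dx. -/

import Mathlib

open MeasureTheory

/-- Partial derivative in the `i`-th coordinate direction of `f : ℝ² → ℝ`. -/
noncomputable def pd (i : Fin 2) (f : EuclideanSpace ℝ (Fin 2) → ℝ) :
    EuclideanSpace ℝ (Fin 2) → ℝ :=
  fun x => fderiv ℝ f x (EuclideanSpace.single i 1)

/-- Hessian determinant of `f : ℝ² → ℝ`. -/
noncomputable def hessDet (f : EuclideanSpace ℝ (Fin 2) → ℝ) :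
    EuclideanSpace ℝ (Fin 2) → ℝ :=
  fun x => pd 0 (pd 0 f) x * pd 1 (pd 1 f) x - (pd 1 (pd 0 f) x) ^ 2

private abbrev E2 := EuclideanSpace ℝ (Fin 2)

lemma pd_contDiff {f : E2 → ℝ} (hf : ContDiff ℝ (⊤ : ℕ∞) f) (i : Fin 2) :
    ContDiff ℝ (⊤ : ℕ∞) (pd i f) :=
  (hf.fderiv_right (by simp)).clm_apply contDiff_const

lemma pd_hasCompactSupport {f : E2 → ℝ} (hc : HasCompactSupport f) (i : Fin 2) :
    HasCompactSupport (pd i f) :=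
  hc.fderiv_apply ℝ (EuclideanSpace.single i 1)

lemma pd_mul {f g : E2 → ℝ} (hf : ContDiff ℝ (⊤ : ℕ∞) f) (hg : ContDiff ℝ (⊤ : ℕ∞) g) (i : Fin 2) :
    pd i (fun x => f x * g x) = fun x => pd i f x * g x + f x * pd i g x := by
  funext x
  have h := fderiv_fun_mul (𝕜 := ℝ) ((hf.differentiable (by simp)) x)
    ((hg.differentiable (by simp)) x)
  simp only [pd, h]
  simp
  ring

lemma pd_comm {f : E2 → ℝ} (hf : ContDiff ℝ (⊤ : ℕ∞) f) (i j : Fin 2) :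
    pd i (pd j f) = pd j (pd i f) := by
  have hd : Differentiable ℝ (fderiv ℝ f) :=
    ((hf.fderiv_right (m := (⊤ : ℕ∞)) (by simp)).differentiable (by simp))
  have key : ∀ (v w : E2) (x : E2),
      fderiv ℝ (fun y => fderiv ℝ f y w) x v = fderiv ℝ (fderiv ℝ f) x v w := by
    intro v w x
    rw [fderiv_clm_apply (hd x) (differentiableAt_const _)]
    simp
  funext x
  have hs : IsSymmSndFDerivAt ℝ f x := hf.contDiffAt.isSymmSndFDerivAt (by
    rw [minSmoothness_of_isRCLikeNormedField]; change ((2 : ℕ∞) : WithTop ℕ∞) ≤ ((⊤ : ℕ∞) : WithTop ℕ∞); exact WithTop.coe_le_coe.mpr le_top)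
  show fderiv ℝ (fun y => fderiv ℝ f y (EuclideanSpace.single j 1)) x (EuclideanSpace.single i 1)
      = fderiv ℝ (fun y => fderiv ℝ f y (EuclideanSpace.single i 1)) x (EuclideanSpace.single j 1)
  rw [key, key]
  exact hs _ _

lemma cc_integrable {f : E2 → ℝ} (hf : Continuous f) (hc : HasCompactSupport f) :
    Integrable f :=
  hf.integrable_of_hasCompactSupport hc

lemma ibp (f g : E2 → ℝ) (hf : ContDiff ℝ (⊤ : ℕ∞) f) (hg : ContDiff ℝ (⊤ : ℕ∞) g)
    (hfc : HasCompactSupport f) (i : Fin 2) :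
    ∫ x, f x * pd i g x = - ∫ x, pd i f x * g x := by
  apply integral_mul_fderiv_eq_neg_fderiv_mul_of_integrable
  · exact cc_integrable (((pd_contDiff hf i).continuous).mul (hg.continuous))
      ((pd_hasCompactSupport hfc i).mul_right)
  · exact cc_integrable ((hf.continuous).mul ((pd_contDiff hg i).continuous))
      (hfc.mul_right)
  · exact cc_integrable ((hf.continuous).mul (hg.continuous)) (hfc.mul_right)
  · exact fun x _ => hf.differentiable (by simp) x
  · exact fun x _ => hg.differentiable (by simp) x


theorem stmt4 (u : EuclideanSpace ℝ (Fin 2) → ℝ)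
    (hu : ContDiff ℝ (⊤ : ℕ∞) u) (huc : HasCompactSupport u) :
    ∫ x, u x * hessDet u x = 3 * ∫ x, pd 0 u x * pd 1 (pd 0 u) x * pd 1 u x := by
  simp only [hessDet]
  set u0 := pd 0 u with hu0
  set u1 := pd 1 u with hu1
  set u00 := pd 0 u0 with hu00
  set u01 := pd 1 u0 with hu01
  set u11 := pd 1 u1 with hu11
  set w := pd 1 u01 with hw
  have hsu0 : ContDiff ℝ (⊤ : ℕ∞) u0 := pd_contDiff hu 0
  have hsu1 : ContDiff ℝ (⊤ : ℕ∞) u1 := pd_contDiff hu 1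
  have hsu00 : ContDiff ℝ (⊤ : ℕ∞) u00 := pd_contDiff hsu0 0
  have hsu01 : ContDiff ℝ (⊤ : ℕ∞) u01 := pd_contDiff hsu0 1
  have hsu11 : ContDiff ℝ (⊤ : ℕ∞) u11 := pd_contDiff hsu1 1
  have hsw : ContDiff ℝ (⊤ : ℕ∞) w := pd_contDiff hsu01 1
  have hcu0 : HasCompactSupport u0 := pd_hasCompactSupport huc 0
  -- Schwarz facts
  have sch1 : pd 0 u1 = u01 := by rw [hu01, hu1, hu0, pd_comm hu]
  have sch2 : pd 0 u11 = w := by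
    rw [hu11, pd_comm hsu1, sch1, hw]
  -- integrability of all needed triple products
  have I : ∀ (f g h : E2 → ℝ), ContDiff ℝ (⊤ : ℕ∞) g → ContDiff ℝ (⊤ : ℕ∞) h →
      ContDiff ℝ (⊤ : ℕ∞) f → HasCompactSupport f →
      Integrable (fun x => f x * g x * h x) := by
    intro f g h hg hh hf hc
    exact cc_integrable (((hf.continuous).mul (hg.continuous)).mul (hh.continuous))
      ((hc.mul_right).mul_right)
  -- Step A
  have hA : ∫ x, (u x * u11 x) * u00 x = - ∫ x, (u0 x * u11 x + u x * w x) * u0 x := by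
    have := ibp (fun x => u x * u11 x) u0 (hu.mul hsu11) hsu0 (huc.mul_right) 0
    rw [this]
    congr 1
    have hm := pd_mul hu hsu11 0
    rw [show pd 0 (fun x => u x * u11 x) = fun x => pd 0 u x * u11 x + u x * pd 0 u11 x from hm,
      sch2, ← hu0]
  -- Step B
  have hB : ∫ x, (u x * u01 x) * u01 x = - ∫ x, (u1 x * u01 x + u x * w x) * u0 x := by
    have := ibp (fun x => u x * u01 x) u0 (hu.mul hsu01) hsu0 (huc.mul_right) 1
    rw [show pd 1 u0 = u01 from rfl] at this
    rw [this]
    congr 1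
    have hm := pd_mul hu hsu01 1
    rw [show pd 1 (fun x => u x * u01 x) = fun x => pd 1 u x * u01 x + u x * pd 1 u01 x from hm,
      ← hw, ← hu1]
  -- Step C
  have hC : ∫ x, (u0 x * u0 x) * u11 x = - ∫ x, (u01 x * u0 x + u0 x * u01 x) * u1 x := by
    have := ibp (fun x => u0 x * u0 x) u1 (hsu0.mul hsu0) hsu1 (hcu0.mul_right) 1
    rw [show pd 1 u1 = u11 from rfl] at this
    rw [this]
    congr 1
    have hm := pd_mul hsu0 hsu0 1
    rw [show pd 1 (fun x => u0 x * u0 x) = fun x => pd 1 u0 x * u0 x + u0 x * pd 1 u0 x from hm,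
      ← hu01]
  set C := ∫ x, u0 x * u01 x * u1 x with hCdef
  set D := ∫ x, u x * w x * u0 x with hDdef
  have iA1 := I u u11 u00 hsu11 hsu00 hu huc
  have iA2 := I u u01 u01 hsu01 hsu01 hu huc
  have iE := I u0 u11 u0 hsu11 hsu0 hsu0 hcu0
  have iD := I u w u0 hsw hsu0 hu huc
  have iC := I u0 u01 u1 hsu01 hsu1 hsu0 hcu0
  have eA2 : ∫ x, (u0 x * u11 x + u x * w x) * u0 x
      = (∫ x, u0 x * u11 x * u0 x) + D := by
    rw [show (fun x => (u0 x * u11 x + u x * w x) * u0 x)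
        = (fun x => u0 x * u11 x * u0 x + u x * w x * u0 x) from funext fun x => by ring]
    exact integral_add iE iD
  have eB2 : ∫ x, (u1 x * u01 x + u x * w x) * u0 x = C + D := by
    rw [show (fun x => (u1 x * u01 x + u x * w x) * u0 x)
        = (fun x => u0 x * u01 x * u1 x + u x * w x * u0 x) from funext fun x => by ring]
    exact integral_add iC iD
  have eC2 : ∫ x, (u01 x * u0 x + u0 x * u01 x) * u1 x = C + C := by
    rw [show (fun x => (u01 x * u0 x + u0 x * u01 x) * u1 x)
        = (fun x => u0 x * u01 x * u1 x + u0 x * u01 x * u1 x) from funext fun x => by ring]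
    exact integral_add iC iC
  have eswap : ∫ x, u0 x * u11 x * u0 x = ∫ x, u0 x * u0 x * u11 x := by
    congr 1; funext x; ring
  have hA' : ∫ x, u x * u11 x * u00 x = -((∫ x, u0 x * u11 x * u0 x) + D) := by
    rw [hA, eA2]
  have hB' : ∫ x, u x * u01 x * u01 x = -(C + D) := by rw [hB, eB2]
  have hC' : ∫ x, u0 x * u0 x * u11 x = -(C + C) := by rw [hC, eC2]
  calc ∫ x, u x * (u00 x * u11 x - u01 x ^ 2)
      = ∫ x, (u x * u11 x * u00 x - u x * u01 x * u01 x) := by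
        congr 1; funext x; ring
    _ = (∫ x, u x * u11 x * u00 x) - ∫ x, u x * u01 x * u01 x := integral_sub iA1 iA2
    _ = 3 * C := by rw [hA', hB', eswap, hC']; ring
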